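/- arXiv:1911.06215 — 3 statements merged into one kernel-verified Lean document; each statement's English description precedes it below -/
import Mathlib

section
/- Fix points x_1,…,x_n ∈ ℝ^d, functions h_1,…,h_W ∈ L²(ℝ^d) that form an orthonormal system (⟨h_i,h_j⟩ = 1 if i = j and 0 otherwise), nonnegative weights ω_1,…,ω_W and a constant c > 0. Set β̃_j := (1/n)Σ_{i=1}^n h_j(x_i). Then the unique minimizer β̂ over ℝ^W of the CSDE objective F(β) = −(2/n)Σ_{i=1}^n h_β(x_i) + ‖h_β‖² + 2Σ_{j=1}^W ω_j|β_j| + cΣ_{j=1}^W β_j² is given coordinatewise by the soft-threshold formula β̂_j = (1 − ω_j/|β̃_j|)_+ · β̃_j/(1+c) when β̃_j ≠ 0, and β̂_j = 0 when β̃_j = 0, where (x)_+ := max(0,x). -/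
/-!
On an orthonormal dictionary `‖h_β‖² = Σ β_j²`, so the objective splits into a sum of scalar
problems `q(t) = (1 + c) t² - 2 β̃_j t + 2 ω_j |t|`. The soft threshold `s` of `β̃_j` is
characterised by the subgradient condition `β̃_j - (1 + c) s ∈ ω_j ∂|·|(s)`, which yields the
quadratic growth bound `q(s) + (1 + c)(t - s)² ≤ q(t)`; summing over `j` gives existence and
uniqueness at once.
-/

open MeasureTheory Finset

noncomputable section

def softThreshold (a w b : ℝ) : ℝ :=
  if b = 0 then 0 else max 0 (1 - w / |b|) * b / a

def penalizedQuadratic (a w b t : ℝ) : ℝ :=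
  a * t ^ 2 - 2 * b * t + 2 * w * |t|

end

section SoftThreshold

variable {a w : ℝ}

theorem softThreshold_subgradient (ha : 0 < a) (hw : 0 ≤ w) (b : ℝ) :
    |b - a * softThreshold a w b| ≤ w ∧
      (b - a * softThreshold a w b) * softThreshold a w b = w * |softThreshold a w b| := by
  unfold softThreshold
  split_ifs with hb
  · simp [hb, hw]
  have hb' : 0 < |b| := abs_pos.mpr hb
  rcases le_or_gt (1 - w / |b|) 0 with hsmall | hlarge
  · have hbw : |b| ≤ w := by rwa [sub_nonpos, le_div_iff₀ hb', one_mul] at hsmall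
    simp [max_eq_left hsmall, hbw]
  · rw [max_eq_right hlarge.le]
    have hgrad : b - a * ((1 - w / |b|) * b / a) = w * (b / |b|) := by
      field_simp; ring
    have hunit : abs (b / |b|) = 1 := by rw [abs_div, abs_abs, div_self hb'.ne']
    rw [hgrad, abs_mul, abs_of_nonneg hw, hunit, mul_one, abs_div, abs_mul, abs_of_pos hlarge,
      abs_of_pos ha]
    refine ⟨le_rfl, ?_⟩
    field_simp
    rw [sq_abs]

theorem penalizedQuadratic_softThreshold_add_sq_le (ha : 0 < a) (hw : 0 ≤ w) (b t : ℝ) :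
    penalizedQuadratic a w b (softThreshold a w b) + a * (t - softThreshold a w b) ^ 2 ≤
      penalizedQuadratic a w b t := by
  set s := softThreshold a w b
  obtain ⟨hbound, hcompl⟩ := softThreshold_subgradient ha hw b
  have hlin : (b - a * s) * t ≤ w * |t| :=
    calc (b - a * s) * t ≤ |b - a * s| * |t| := by rw [← abs_mul]; exact le_abs_self _
      _ ≤ w * |t| := mul_le_mul_of_nonneg_right hbound (abs_nonneg t)
  unfold penalizedQuadratic
  linear_combination 2 * hlin - 2 * hcompl

end SoftThreshold

theorem sum_sq_eq_zero_iff_eq {ι : Type*} [Fintype ι] {β s : ι → ℝ} :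
    ∑ j, (β j - s j) ^ 2 = 0 ↔ β = s := by
  rw [sum_eq_zero_iff_of_nonneg fun j _ => sq_nonneg _, funext_iff]
  simp [sub_eq_zero]

theorem isMinimizer_unique_of_quadratic_growth {ι : Type*} [Fintype ι] {Φ : (ι → ℝ) → ℝ}
    {s : ι → ℝ} {a : ℝ} (ha : 0 < a) (hgrowth : ∀ β, Φ s + a * ∑ j, (β j - s j) ^ 2 ≤ Φ β) :
    (∀ β, Φ s ≤ Φ β) ∧ ∀ β', (∀ β, Φ β' ≤ Φ β) → β' = s := by
  have hnonneg : ∀ β : ι → ℝ, 0 ≤ a * ∑ j, (β j - s j) ^ 2 := fun β =>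
    mul_nonneg ha.le (sum_nonneg fun j _ => sq_nonneg _)
  refine ⟨fun β => by linarith [hgrowth β, hnonneg β], fun β' hβ' => ?_⟩
  have hzero : a * ∑ j, (β' j - s j) ^ 2 = 0 :=
    le_antisymm (by linarith [hgrowth β', hβ' s]) (hnonneg β')
  exact sum_sq_eq_zero_iff_eq.mp ((mul_eq_zero.mp hzero).resolve_left ha.ne')

theorem integral_sq_sum_mul_of_orthonormal {α ι : Type*} [MeasurableSpace α] {μ : Measure α}
    [Fintype ι] [DecidableEq ι] {h : ι → α → ℝ} (hL2 : ∀ j, MemLp (h j) 2 μ)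
    (horth : ∀ i j, ∫ y, h i y * h j y ∂μ = if i = j then 1 else 0) (β : ι → ℝ) :
    ∫ y, (∑ j, β j * h j y) ^ 2 ∂μ = ∑ j, β j ^ 2 := by
  have hint : ∀ i j, Integrable (fun y => β i * β j * (h i y * h j y)) μ := fun i j =>
    ((hL2 i).integrable_mul (hL2 j)).const_mul _
  have hexpand : ∀ y, (∑ j, β j * h j y) ^ 2 = ∑ i, ∑ j, β i * β j * (h i y * h j y) := by
    intro y
    rw [sq, sum_mul_sum]
    exact sum_congr rfl fun i _ => sum_congr rfl fun j _ => by ring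
  simp_rw [hexpand]
  rw [integral_finsetSum _ fun i _ => integrable_finsetSum _ fun j _ => hint i j]
  simp_rw [integral_finsetSum _ fun j _ => hint _ j, integral_const_mul, horth]
  simp [sq]

theorem csde_orthonormal_soft_threshold_general {d W n : ℕ}
    (x : Fin n → (Fin d → ℝ))
    (h : Fin W → (Fin d → ℝ) → ℝ)
    (hL2 : ∀ j, MemLp (h j) 2 (volume : Measure (Fin d → ℝ)))
    (horth : ∀ i j : Fin W, (∫ y, h i y * h j y) = if i = j then (1 : ℝ) else 0)
    (ω : Fin W → ℝ) (hω : ∀ j, 0 ≤ ω j)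
    (c : ℝ) (hc : 0 < c)
    (F : (Fin W → ℝ) → ℝ)
    (hF : ∀ β : Fin W → ℝ, F β =
        -(2 / (n : ℝ)) * (∑ i, ∑ j, β j * h j (x i))
        + (∫ y, (∑ j, β j * h j y) ^ 2)
        + 2 * (∑ j, ω j * |β j|) + c * (∑ j, (β j) ^ 2))
    (btil : Fin W → ℝ)
    (hbtil : ∀ j, btil j = (1 / (n : ℝ)) * ∑ i, h j (x i))
    (bhat : Fin W → ℝ)
    (hbhat : ∀ j, bhat j =
      if btil j = 0 then 0 else (max 0 (1 - ω j / |btil j|)) * btil j / (1 + c)) :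
    (∀ β : Fin W → ℝ, F bhat ≤ F β) ∧
      (∀ β' : Fin W → ℝ, (∀ β : Fin W → ℝ, F β' ≤ F β) → β' = bhat) := by
  have ha : 0 < 1 + c := by linarith
  have hsep : ∀ β, F β = ∑ j, penalizedQuadratic (1 + c) (ω j) (btil j) (β j) := by
    intro β
    rw [hF, integral_sq_sum_mul_of_orthonormal hL2 horth, sum_comm, mul_sum, mul_sum, mul_sum,
      ← sum_add_distrib, ← sum_add_distrib, ← sum_add_distrib]
    refine sum_congr rfl fun j _ => ?_
    rw [penalizedQuadratic, hbtil, ← mul_sum]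
    ring
  have hbhat' : bhat = fun j => softThreshold (1 + c) (ω j) (btil j) := funext hbhat
  refine isMinimizer_unique_of_quadratic_growth ha fun β => ?_
  rw [hsep, hsep, mul_sum, ← sum_add_distrib, hbhat']
  exact sum_le_sum fun j _ => penalizedQuadratic_softThreshold_add_sq_le ha (hω j) _ _

/-- For an orthonormal dictionary, the CSDE objective has a unique
minimizer, given coordinatewise by the soft-threshold formula. -/
theorem csde_orthonormal_soft_threshold {d W n : ℕ} (hn : 0 < n)
    (x : Fin n → (Fin d → ℝ))
    (h : Fin W → (Fin d → ℝ) → ℝ)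
    (hL2 : ∀ j, MemLp (h j) 2 (volume : Measure (Fin d → ℝ)))
    (horth : ∀ i j : Fin W, (∫ y, h i y * h j y) = if i = j then (1 : ℝ) else 0)
    (ω : Fin W → ℝ) (hω : ∀ j, 0 ≤ ω j)
    (c : ℝ) (hc : 0 < c)
    (F : (Fin W → ℝ) → ℝ)
    (hF : ∀ β : Fin W → ℝ, F β =
        -(2 / (n : ℝ)) * (∑ i, ∑ j, β j * h j (x i))
        + (∫ y, (∑ j, β j * h j y) ^ 2)
        + 2 * (∑ j, ω j * |β j|) + c * (∑ j, (β j) ^ 2))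
    (btil : Fin W → ℝ)
    (hbtil : ∀ j, btil j = (1 / (n : ℝ)) * ∑ i, h j (x i))
    (bhat : Fin W → ℝ)
    (hbhat : ∀ j, bhat j =
      if btil j = 0 then 0 else (max 0 (1 - ω j / |btil j|)) * btil j / (1 + c)) :
    (∀ β : Fin W → ℝ, F bhat ≤ F β) ∧
      (∀ β' : Fin W → ℝ, (∀ β : Fin W → ℝ, F β' ≤ F β) → β' = bhat) :=
  csde_orthonormal_soft_threshold_general x h hL2 horth ω hω c hc F hF btil hbtil bhat hbhat
end

section
/- Let X_1,…,X_n be ℝ^d-valued random variables with common density h ∈ L²(ℝ^d), so that E[h_j(X_1)] = ⟨h_j,h⟩ for each j, where h_1,…,h_W ∈ L²(ℝ^d) satisfy 0 ≤ h_j ≤ L_j with 0 < L_j < ∞. Let 0 < δ < 1, B > 0, v := √(log(2W/δ)/n), ω̃_j := 2√2·L_j·v, c := (min_{1≤j≤W} ω̃_j)/B and ω_j := ω̃_j + cB. Let β̂ be a minimizer over ℝ^W of the CSDE objective F(β) = −(2/n)Σ_{i=1}^n h_β(X_i) + ‖h_β‖² + 2Σ_{j=1}^W ω_j|β_j| + cΣ_{j=1}^W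 β_j². Then for any β ∈ ℝ^W with max_{1≤j≤W}|β_j| ≤ B, on the event 𝓔 = ∩_{j=1}^W {2|M_j| ≤ ω̃_j}, where M_j := (1/n)Σ_{i=1}^n (h_j(X_i) − E[h_j(X_i)]), it holds that ‖h_β̂ − h‖² + Σ_{j=1}^W ω̃_j|β̂_j − β_j| + cΣ_{j=1}^W (β̂_j − β_j)² ≤ ‖h_β − h‖² + 6Σ_{j∈I(β)} ω_j|β̂_j − β_j|. -/
/-!
Write `h_γ = ∑ⱼ γⱼ hⱼ` and `Tⱼ = ⟨hⱼ, h⟩`. Since `‖h_γ‖² = ‖h_γ - h‖² - ‖h‖² + 2 ∑ⱼ γⱼ Tⱼ` and the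
empirical mean of `h_γ` is `∑ⱼ γⱼ (Mⱼ + Tⱼ)`, the CSDE objective equals
`‖h_γ - h‖² - ‖h‖² - 2 ∑ⱼ γⱼ Mⱼ + 2 ∑ⱼ ωⱼ |γⱼ| + c ∑ⱼ γⱼ²`.
Comparing its values at the minimizer `β̂` and at `β` leaves a sum of one-dimensional terms,
each of which is bounded using `2|Mⱼ| ≤ ω̃ⱼ`, `|βⱼ| ≤ B` and `ωⱼ = ω̃ⱼ + cB`.
-/

open MeasureTheory Finset

section L2

variable {α ι : Type*} [MeasurableSpace α] {μ : Measure α} [Fintype ι]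

theorem integral_sq_eq_integral_sub_sq_sub_add {f g : α → ℝ} (hf : MemLp f 2 μ)
    (hg : MemLp g 2 μ) :
    ∫ x, f x ^ 2 ∂μ = ∫ x, (f x - g x) ^ 2 ∂μ - ∫ x, g x ^ 2 ∂μ + 2 * ∫ x, f x * g x ∂μ := by
  have hfg : Integrable (fun x => f x * g x) μ := hf.integrable_mul hg
  have hsq : Integrable (fun x => (f x - g x) ^ 2) μ := (hf.sub hg).integrable_sq
  have hdiff : Integrable (fun x => (f x - g x) ^ 2 - g x ^ 2) μ := hsq.sub hg.integrable_sq
  calc ∫ x, f x ^ 2 ∂μ = ∫ x, ((f x - g x) ^ 2 - g x ^ 2 + 2 * (f x * g x)) ∂μ := by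
        congr 1; ext x; ring
    _ = _ := by
        rw [integral_add hdiff (hfg.const_mul 2),
          integral_sub hsq hg.integrable_sq, integral_const_mul]

theorem integral_linearCombination_mul {h : ι → α → ℝ} {g : α → ℝ} (hh : ∀ j, MemLp (h j) 2 μ)
    (hg : MemLp g 2 μ) (γ : ι → ℝ) :
    ∫ x, (∑ j, γ j * h j x) * g x ∂μ = ∑ j, γ j * ∫ x, h j x * g x ∂μ := by
  simp_rw [sum_mul, mul_assoc]
  have hint : ∀ j ∈ univ, Integrable (fun x => γ j * (h j x * g x)) μ :=
    fun j _ => ((hh j).integrable_mul hg).const_mul (γ j)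
  rw [integral_finsetSum _ hint]
  simp_rw [integral_const_mul]

theorem integral_linearCombination_sq {h : ι → α → ℝ} {g : α → ℝ} (hh : ∀ j, MemLp (h j) 2 μ)
    (hg : MemLp g 2 μ) (γ : ι → ℝ) :
    ∫ x, (∑ j, γ j * h j x) ^ 2 ∂μ
      = ∫ x, (∑ j, γ j * h j x - g x) ^ 2 ∂μ - ∫ x, g x ^ 2 ∂μ
        + 2 * ∑ j, γ j * ∫ x, h j x * g x ∂μ := by
  rw [integral_sq_eq_integral_sub_sq_sub_add
      (memLp_finsetSum _ fun j _ => (hh j).const_mul (γ j)) hg,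
    integral_linearCombination_mul hh hg]

end L2

theorem sum_linearCombination_eq_of_centered_mean {ι : Type*} [Fintype ι] {n : ℕ} (hn : n ≠ 0)
    (a : ι → Fin n → ℝ) (e M γ : ι → ℝ) (hM : ∀ j, M j = (1 / (n : ℝ)) * ∑ i, (a j i - e j)) :
    ∑ i, ∑ j, γ j * a j i = n * ∑ j, γ j * M j + n * ∑ j, γ j * e j := by
  have hsum : ∀ j, ∑ i, a j i = n * M j + n * e j := fun j => by
    rw [hM, sum_sub_distrib, sum_const, card_univ, Fintype.card_fin, nsmul_eq_mul]
    field_simp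
    ring
  simp_rw [sum_comm (γ := Fin n), ← mul_sum, hsum, mul_sum, ← sum_add_distrib]
  exact sum_congr rfl fun j _ => by ring

theorem lasso_ridge_coord_le {b a m ωt ω c B : ℝ} (hm : 2 * |m| ≤ ωt)
    (hω : ω = ωt + c * B) (hc : 0 ≤ c) (ha : |a| ≤ B) :
    ωt * |b - a| + c * (b - a) ^ 2 + 2 * ((b - a) * m) + 2 * (ω * (|a| - |b|))
        + c * (a ^ 2 - b ^ 2)
      ≤ if a ≠ 0 then 6 * (ω * |b - a|) else 0 := by
  have hωt : 0 ≤ ωt := (mul_nonneg zero_le_two (abs_nonneg m)).trans hm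
  have hcB : 0 ≤ c * B := mul_nonneg hc ((abs_nonneg a).trans ha)
  have hnoise : 2 * ((b - a) * m) ≤ ωt * |b - a| :=
    calc 2 * ((b - a) * m) ≤ 2 * |(b - a) * m| := by linarith [le_abs_self ((b - a) * m)]
      _ = |b - a| * (2 * |m|) := by rw [abs_mul]; ring
      _ ≤ |b - a| * ωt := mul_le_mul_of_nonneg_left hm (abs_nonneg _)
      _ = ωt * |b - a| := mul_comm _ _
  subst hω
  split_ifs with ha0
  · have hridge : c * (b - a) ^ 2 + c * (a ^ 2 - b ^ 2) ≤ 2 * (c * B) * |b - a| :=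
      calc c * (b - a) ^ 2 + c * (a ^ 2 - b ^ 2) = 2 * c * (a * (a - b)) := by ring
        _ ≤ 2 * c * (|a| * |b - a|) := by
            rw [abs_sub_comm b a, ← abs_mul]
            exact mul_le_mul_of_nonneg_left (le_abs_self _) (by positivity)
        _ ≤ 2 * c * (B * |b - a|) :=
            mul_le_mul_of_nonneg_left (mul_le_mul_of_nonneg_right ha (abs_nonneg _))
              (by positivity)
        _ = 2 * (c * B) * |b - a| := by ring
    have htri : (ωt + c * B) * (|a| - |b|) ≤ (ωt + c * B) * |b - a| := by
      rw [abs_sub_comm]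
      exact mul_le_mul_of_nonneg_left (abs_sub_abs_le_abs_sub a b) (by positivity)
    nlinarith [mul_nonneg (add_nonneg hωt hcB) (abs_nonneg (b - a))]
  · obtain rfl : a = 0 := not_not.mp ha0
    simp only [sub_zero, abs_zero, zero_sub] at hnoise ⊢
    nlinarith [mul_nonneg hcB (abs_nonneg b)]

theorem oracle_ineq_of_basic_ineq {ι : Type*} [Fintype ι] {Rb Rβ c B : ℝ}
    {b β M ωt ω : ι → ℝ} (hmin : Rb - 2 * ∑ j, b j * M j + 2 * ∑ j, ω j * |b j| + c * ∑ j, b j ^ 2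
      ≤ Rβ - 2 * ∑ j, β j * M j + 2 * ∑ j, ω j * |β j| + c * ∑ j, β j ^ 2)
    (hM : ∀ j, 2 * |M j| ≤ ωt j) (hω : ∀ j, ω j = ωt j + c * B) (hc : 0 ≤ c)
    (hβ : ∀ j, |β j| ≤ B) :
    Rb + ∑ j, ωt j * |b j - β j| + c * ∑ j, (b j - β j) ^ 2
      ≤ Rβ + 6 * ∑ j ∈ univ.filter (fun j => β j ≠ 0), ω j * |b j - β j| := by
  have hsum := sum_le_sum fun j (_ : j ∈ univ) =>
    lasso_ridge_coord_le (b := b j) (hM j) (hω j) hc (hβ j)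
  rw [← sum_filter, ← mul_sum] at hsum
  simp only [sum_add_distrib, ← mul_sum, sub_mul, mul_sub,
    sum_sub_distrib] at hsum
  linarith

theorem csde_basic_oracle_on_event_general {d W n : ℕ} (hn : 0 < n) (hW : 0 < W)
    {Ω : Type*} [MeasurableSpace Ω] (μ : Measure Ω)
    (X : Fin n → Ω → (Fin d → ℝ))
    (h : Fin W → (Fin d → ℝ) → ℝ)
    (hL2 : ∀ j, MemLp (h j) 2 (volume : Measure (Fin d → ℝ)))
    -- the common density of the Xᵢ
    (hh : (Fin d → ℝ) → ℝ) (hhL2 : MemLp hh 2 (volume : Measure (Fin d → ℝ)))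
    (hE : ∀ j i, (∫ ω, h j (X i ω) ∂μ) = ∫ y, h j y * hh y)
    (B : ℝ) (hB : 0 < B)
    (omt : Fin W → ℝ)
    (c : ℝ) (hc : c = (Finset.univ.inf' ⟨⟨0, hW⟩, Finset.mem_univ _⟩ omt) / B)
    (ωw : Fin W → ℝ) (hωw : ∀ j, ωw j = omt j + c * B)
    (F : Ω → (Fin W → ℝ) → ℝ)
    (hF : ∀ ω (β : Fin W → ℝ), F ω β =
        -(2 / (n : ℝ)) * (∑ i, ∑ j, β j * h j (X i ω))
        + (∫ y, (∑ j, β j * h j y) ^ 2)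
        + 2 * (∑ j, ωw j * |β j|) + c * (∑ j, (β j) ^ 2))
    (bhat : Ω → Fin W → ℝ)
    (hmin : ∀ ω (β : Fin W → ℝ), F ω (bhat ω) ≤ F ω β)
    (M : Fin W → Ω → ℝ)
    (hM : ∀ j ω, M j ω = (1 / (n : ℝ)) * ∑ i, (h j (X i ω) - ∫ ω', h j (X i ω') ∂μ)) :
    ∀ β : Fin W → ℝ, (∀ j, |β j| ≤ B) →
      ∀ ω : Ω, (∀ j : Fin W, 2 * |M j ω| ≤ omt j) →
        (∫ y, (∑ j, bhat ω j * h j y - hh y) ^ 2)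
          + (∑ j, omt j * |bhat ω j - β j|) + c * (∑ j, (bhat ω j - β j) ^ 2)
        ≤ (∫ y, (∑ j, β j * h j y - hh y) ^ 2)
          + 6 * ∑ j ∈ Finset.filter (fun j => β j ≠ 0) Finset.univ, ωw j * |bhat ω j - β j| := by
  intro β hβB ω hev
  have hc0 : 0 ≤ c := hc ▸ div_nonneg
    (le_inf' _ _ fun j _ => (by positivity : (0 : ℝ) ≤ 2 * |M j ω|).trans (hev j)) hB.le
  have hMω : ∀ j, M j ω = 1 / (n : ℝ) * ∑ i, (h j (X i ω) - ∫ y, h j y * hh y) := fun j => by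
    simp_rw [hM, hE]
  have hobj : ∀ γ, F ω γ = (∫ y, (∑ j, γ j * h j y - hh y) ^ 2) - (∫ y, hh y ^ 2)
      - 2 * ∑ j, γ j * M j ω + 2 * ∑ j, ωw j * |γ j| + c * ∑ j, γ j ^ 2 := fun γ => by
    rw [hF, integral_linearCombination_sq hL2 hhL2,
      sum_linearCombination_eq_of_centered_mean hn.ne' (fun j i => h j (X i ω)) _ _ γ hMω]
    field_simp
    ring
  have hbasic := hmin ω β
  rw [hobj, hobj] at hbasic
  exact oracle_ineq_of_basic_ineq (by linarith) hev hωw hc0 hβB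

/-- Lemma 3: on the event 𝓔 = ∩_j {2|M_j| ≤ ω̃_j}, the CSDE
minimizer satisfies the basic oracle-type inequality. -/
theorem csde_basic_oracle_on_event {d W n : ℕ} (hn : 0 < n) (hW : 0 < W)
    {Ω : Type*} [MeasurableSpace Ω] (μ : Measure Ω) [IsProbabilityMeasure μ]
    (X : Fin n → Ω → (Fin d → ℝ)) (hXm : ∀ i, Measurable (X i))
    (h : Fin W → (Fin d → ℝ) → ℝ)
    (hL2 : ∀ j, MemLp (h j) 2 (volume : Measure (Fin d → ℝ)))
    (L : Fin W → ℝ) (hLpos : ∀ j, 0 < L j)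
    (hbd : ∀ j y, 0 ≤ h j y ∧ h j y ≤ L j)
    -- the common density of the Xᵢ
    (hh : (Fin d → ℝ) → ℝ) (hhL2 : MemLp hh 2 (volume : Measure (Fin d → ℝ)))
    (hXdens : ∀ i, μ.map (X i)
      = (volume : Measure (Fin d → ℝ)).withDensity (fun y => ENNReal.ofReal (hh y)))
    (hE : ∀ j i, (∫ ω, h j (X i ω) ∂μ) = ∫ y, h j y * hh y)
    (δ : ℝ) (hδ0 : 0 < δ) (hδ1 : δ < 1) (B : ℝ) (hB : 0 < B)
    (v : ℝ) (hv : v = Real.sqrt (Real.log (2 * W / δ) / n))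
    (omt : Fin W → ℝ) (homt : ∀ j, omt j = 2 * Real.sqrt 2 * L j * v)
    (c : ℝ) (hc : c = (Finset.univ.inf' ⟨⟨0, hW⟩, Finset.mem_univ _⟩ omt) / B)
    (ωw : Fin W → ℝ) (hωw : ∀ j, ωw j = omt j + c * B)
    (F : Ω → (Fin W → ℝ) → ℝ)
    (hF : ∀ ω (β : Fin W → ℝ), F ω β =
        -(2 / (n : ℝ)) * (∑ i, ∑ j, β j * h j (X i ω))
        + (∫ y, (∑ j, β j * h j y) ^ 2)
        + 2 * (∑ j, ωw j * |β j|) + c * (∑ j, (β j) ^ 2))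
    (bhat : Ω → Fin W → ℝ)
    (hmin : ∀ ω (β : Fin W → ℝ), F ω (bhat ω) ≤ F ω β)
    (M : Fin W → Ω → ℝ)
    (hM : ∀ j ω, M j ω = (1 / (n : ℝ)) * ∑ i, (h j (X i ω) - ∫ ω', h j (X i ω') ∂μ)) :
    ∀ β : Fin W → ℝ, (∀ j, |β j| ≤ B) →
      ∀ ω : Ω, (∀ j : Fin W, 2 * |M j ω| ≤ omt j) →
        (∫ y, (∑ j, bhat ω j * h j y - hh y) ^ 2)
          + (∑ j, omt j * |bhat ω j - β j|) + c * (∑ j, (bhat ω j - β j) ^ 2)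
        ≤ (∫ y, (∑ j, β j * h j y - hh y) ^ 2)
          + 6 * ∑ j ∈ Finset.filter (fun j => β j ≠ 0) Finset.univ, ωw j * |bhat ω j - β j| :=
  csde_basic_oracle_on_event_general hn hW μ X h hL2 hh hhL2 hE B hB omt c hc ωw hωw F hF bhat hmin
    M hM
end

section
/- Let X_1,…,X_n be i.i.d. ℝ^d-valued random variables with common density h := h_{β*} ∈ L²(ℝ^d), where β* ∈ ℝ^W has β*_j ≥ 0, Σ_{j=1}^W β*_j = 1 and 0 < max_j|β*_j| ≤ B, and h_1,…,h_W ∈ L²(ℝ^d) are probability densities with ‖h_j‖ = 1 and 0 ≤ h_j ≤ L_j, L_min := min_j L_j > 0. Suppose the Gram matrix ψ_W := (⟨h_i,h_j⟩)_{1≤i,j≤W} is positive definite with smallest eigenvalue at least λ_W > 0. Let 0 < δ < 1, v := √(log(2W²/δ)/n), ω̃_j := 2√2·L_j·v, c := (min_j ω̃_j)/B, ω_j := ω̃_j + cB, and let β̂ be a measurable minimizer over ℝ^W of the CSDE objective F(β) = −(2/n)Σ_{i=1}^n h_β(X_i) + ‖h_β‖² + 2Σ_{j=1}^W ω_j|β_j|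 + cΣ_{j=1}^W β_j². Then, with probability at least 1 − δ/W, Σ_{j=1}^W |β̂_j − β*_j| ≤ 288√2·v·G*/(L_min·λ_W), where G* := Σ_{j∈I(β*)} L_j². -/
/-! Write `Δ = β̂ - β*`, `I` for the support of `β*`, `ψ` for the Gram matrix and
`S_j = (1/n) Σᵢ h_j(Xᵢ)`. Since `E h_j(Xᵢ) = ⟨h_j, h_{β*}⟩ = (ψ β*)_j`, Hoeffding's inequality
and a union bound over `j` show that with probability at least `1 - δ/W` every
`|S_j - (ψ β*)_j|` is at most `ω̃_j / 2`. On that event, comparing the objective at `β̂` and at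
`β*` coordinate by coordinate gives the cone inequality
`Δᵀ ψ Δ + Σ_{j ∉ I} ω̃_j |Δ_j| ≤ 7 Σ_{j ∈ I} ω̃_j |Δ_j|`: off `I` the penalty `2 ω_j |β̂_j|`
beats the noise, and the ridge term costs at most `2 c B |Δ_j| ≤ 2 ω̃_j |Δ_j|`. Hence
`L_min ‖Δ‖₁ ≤ 8 T` for `T = Σ_{j ∈ I} L_j |Δ_j|`, while the eigenvalue bound and Cauchy–Schwarz
give `λ_W T² ≤ G* Δᵀ ψ Δ ≤ 7 · 2√2 v · G* T`, so `‖Δ‖₁ ≤ 112 √2 v G* / (L_min λ_W)`. -/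

open MeasureTheory Finset ProbabilityTheory Matrix

lemma two_mul_mul_le_of_abs_le {x y w : ℝ} (hy : |y| ≤ w / 2) : 2 * x * y ≤ w * |x| := by
  have hxy : x * y ≤ |x| * |y| := (le_abs_self _).trans (abs_mul x y).le
  nlinarith [abs_nonneg x]

lemma csde_coord_le_of_eq_zero {a b s m w c B : ℝ} (hb : b = 0) (hs : |s - m| ≤ w / 2)
    (hc : 0 ≤ c) (hB : |b| ≤ B) :
    2 * (a - b) * (s - m) + 2 * (w + c * B) * (|b| - |a|) + c * (b ^ 2 - a ^ 2)
      ≤ -(w * |a - b|) := by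
  subst hb
  have hnoise := two_mul_mul_le_of_abs_le (x := a) hs
  have hcB : 0 ≤ c * B := mul_nonneg hc (abs_zero (α := ℝ) ▸ hB)
  simp only [sub_zero, abs_zero, zero_sub] at hnoise ⊢
  nlinarith [abs_nonneg a, sq_nonneg a]

lemma csde_coord_le {a b s m w c B : ℝ} (hs : |s - m| ≤ w / 2) (hc : 0 ≤ c) (hB : |b| ≤ B)
    (hcB : c * B ≤ w) :
    2 * (a - b) * (s - m) + 2 * (w + c * B) * (|b| - |a|) + c * (b ^ 2 - a ^ 2)
      ≤ 7 * (w * |a - b|) := by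
  have hnoise := two_mul_mul_le_of_abs_le (x := a - b) hs
  have hw : 0 ≤ w := by linarith [abs_nonneg (s - m)]
  have hpenalty : |b| - |a| ≤ |a - b| := by
    rw [abs_sub_comm]
    exact abs_sub_abs_le_abs_sub b a
  have hridge : b ^ 2 - a ^ 2 ≤ 2 * B * |a - b| := by
    have hba : -(|b| * |a - b|) ≤ b * (a - b) := by rw [← abs_mul]; exact neg_abs_le _
    nlinarith [sq_nonneg (a - b), abs_nonneg (a - b)]
  have hcB0 : 0 ≤ c * B := mul_nonneg hc ((abs_nonneg b).trans hB)
  nlinarith [abs_nonneg (a - b), mul_le_mul_of_nonneg_left hpenalty (by linarith : 0 ≤ w + c * B),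
    mul_le_mul_of_nonneg_left hridge hc]

section CSDEObjective

variable {ι : Type*} [Fintype ι]

/-- The CSDE objective `F(β)`, with the empirical means `S_j` in place of the sample and the Gram
matrix `ψ` in place of `‖h_β‖²`. -/
def csdeObjective (S : ι → ℝ) (ψ : Matrix ι ι ℝ) (ω : ι → ℝ) (c : ℝ) (β : ι → ℝ) : ℝ :=
  -2 * (β ⬝ᵥ S) + β ⬝ᵥ ψ *ᵥ β + 2 * ∑ j, ω j * |β j| + c * ∑ j, β j ^ 2

lemma add_dotProduct_mulVec_add_of_isSymm {ψ : Matrix ι ι ℝ} (hψ : ψ.IsSymm) (x y : ι → ℝ) :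
    (x + y) ⬝ᵥ ψ *ᵥ (x + y) = x ⬝ᵥ ψ *ᵥ x + 2 * (x ⬝ᵥ ψ *ᵥ y) + y ⬝ᵥ ψ *ᵥ y := by
  have hswap : y ⬝ᵥ ψ *ᵥ x = x ⬝ᵥ ψ *ᵥ y := by
    rw [dotProduct_mulVec, ← mulVec_transpose, hψ.eq, dotProduct_comm]
  simp only [add_dotProduct, mulVec_add, dotProduct_add, hswap]
  ring

lemma quadForm_sub_le_of_csdeObjective_le {S : ι → ℝ} {ψ : Matrix ι ι ℝ} (hψ : ψ.IsSymm)
    {ω : ι → ℝ} {c : ℝ} {bh bs : ι → ℝ}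
    (hle : csdeObjective S ψ ω c bh ≤ csdeObjective S ψ ω c bs) :
    (bh - bs) ⬝ᵥ ψ *ᵥ (bh - bs) ≤ ∑ j, (2 * (bh j - bs j) * (S j - (ψ *ᵥ bs) j)
      + 2 * ω j * (|bs j| - |bh j|) + c * (bs j ^ 2 - bh j ^ 2)) := by
  have hexpand := add_dotProduct_mulVec_add_of_isSymm hψ (bh - bs) bs
  rw [sub_add_cancel] at hexpand
  have hsum : ∑ j, (2 * (bh j - bs j) * (S j - (ψ *ᵥ bs) j)
      + 2 * ω j * (|bs j| - |bh j|) + c * (bs j ^ 2 - bh j ^ 2))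
      = 2 * (bh ⬝ᵥ S) - 2 * (bs ⬝ᵥ S) - 2 * ((bh - bs) ⬝ᵥ ψ *ᵥ bs)
        + 2 * ∑ j, ω j * |bs j| - 2 * ∑ j, ω j * |bh j|
        + c * ∑ j, bs j ^ 2 - c * ∑ j, bh j ^ 2 := by
    simp only [dotProduct, Pi.sub_apply, mul_sum, ← sum_sub_distrib, ← sum_add_distrib]
    exact sum_congr rfl fun j _ => by ring
  unfold csdeObjective at hle
  linarith

lemma quadForm_add_sum_le_of_csdeObjective_le [DecidableEq ι] {S : ι → ℝ} {ψ : Matrix ι ι ℝ}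
    (hψ : ψ.IsSymm) {w : ι → ℝ} {c B : ℝ} (hc : 0 ≤ c) (hcB : ∀ j, c * B ≤ w j) {bh bs : ι → ℝ}
    (hbsB : ∀ j, |bs j| ≤ B) (hS : ∀ j, |S j - (ψ *ᵥ bs) j| ≤ w j / 2)
    (hle : csdeObjective S ψ (fun j => w j + c * B) c bh
      ≤ csdeObjective S ψ (fun j => w j + c * B) c bs) :
    (bh - bs) ⬝ᵥ ψ *ᵥ (bh - bs) + ∑ j ∈ (univ.filter fun j => bs j ≠ 0)ᶜ, w j * |bh j - bs j|
      ≤ 7 * ∑ j ∈ univ.filter (fun j => bs j ≠ 0), w j * |bh j - bs j| := by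
  set I := univ.filter fun j => bs j ≠ 0
  have hbasic := quadForm_sub_le_of_csdeObjective_le hψ hle
  rw [← sum_add_sum_compl I] at hbasic
  have hon : ∑ j ∈ I, (2 * (bh j - bs j) * (S j - (ψ *ᵥ bs) j)
      + 2 * (w j + c * B) * (|bs j| - |bh j|) + c * (bs j ^ 2 - bh j ^ 2))
      ≤ 7 * ∑ j ∈ I, w j * |bh j - bs j| := by
    rw [mul_sum]
    exact sum_le_sum fun j _ => csde_coord_le (hS j) hc (hbsB j) (hcB j)
  have hoff : ∑ j ∈ Iᶜ, (2 * (bh j - bs j) * (S j - (ψ *ᵥ bs) j)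
      + 2 * (w j + c * B) * (|bs j| - |bh j|) + c * (bs j ^ 2 - bh j ^ 2))
      ≤ -∑ j ∈ Iᶜ, w j * |bh j - bs j| := by
    rw [← sum_neg_distrib]
    refine sum_le_sum fun j hj => csde_coord_le_of_eq_zero ?_ (hS j) hc (hbsB j)
    simpa [I] using hj
  linarith

lemma sq_sum_mul_abs_le (s : Finset ι) (a u : ι → ℝ) :
    (∑ j ∈ s, a j * |u j|) ^ 2 ≤ (∑ j ∈ s, a j ^ 2) * ∑ j, u j ^ 2 := by
  calc (∑ j ∈ s, a j * |u j|) ^ 2 ≤ (∑ j ∈ s, a j ^ 2) * ∑ j ∈ s, |u j| ^ 2 :=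
        sum_mul_sq_le_sq_mul_sq s a fun j => |u j|
    _ ≤ (∑ j ∈ s, a j ^ 2) * ∑ j, u j ^ 2 := by
        simp only [sq_abs]
        exact mul_le_mul_of_nonneg_left
          (sum_le_sum_of_subset_of_nonneg (subset_univ s) fun j _ _ => sq_nonneg _)
          (sum_nonneg fun j _ => sq_nonneg _)

lemma sum_abs_le_of_cone [DecidableEq ι] {u : ι → ℝ} {D lW : ℝ} (hlW : 0 < lW)
    (hquad : lW * ∑ j, u j ^ 2 ≤ D) {L : ι → ℝ} {Lmin κ : ℝ} (hLmin : 0 < Lmin)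
    (hL : ∀ j, Lmin ≤ L j) (hκ : 0 < κ) {s : Finset ι}
    (hcone : D + ∑ j ∈ sᶜ, κ * L j * |u j| ≤ 7 * ∑ j ∈ s, κ * L j * |u j|) :
    ∑ j, |u j| ≤ 56 * κ * (∑ j ∈ s, L j ^ 2) / (Lmin * lW) := by
  set T := ∑ j ∈ s, L j * |u j|
  set G := ∑ j ∈ s, L j ^ 2
  simp only [mul_assoc, ← mul_sum] at hcone
  have hweighted_nonneg : ∀ t : Finset ι, 0 ≤ ∑ j ∈ t, L j * |u j| := fun t =>
    sum_nonneg fun j _ => mul_nonneg (hLmin.le.trans (hL j)) (abs_nonneg _)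
  have hweighted : ∀ t : Finset ι, Lmin * ∑ j ∈ t, |u j| ≤ ∑ j ∈ t, L j * |u j| := fun t => by
    rw [mul_sum]
    exact sum_le_sum fun j _ => mul_le_mul_of_nonneg_right (hL j) (abs_nonneg _)
  have hD0 : 0 ≤ D :=
    (mul_nonneg hlW.le (sum_nonneg fun j _ => sq_nonneg _)).trans hquad
  have hT0 : 0 ≤ T := hweighted_nonneg s
  have hG0 : 0 ≤ G := sum_nonneg fun j _ => sq_nonneg _
  have hl1 : Lmin * ∑ j, |u j| ≤ 8 * T := by
    have hoff : ∑ j ∈ sᶜ, L j * |u j| ≤ 7 * T := by nlinarith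
    rw [← sum_add_sum_compl s, mul_add]
    linarith [hweighted s, hweighted sᶜ]
  have hT : lW * T ≤ 7 * κ * G := by
    have hD_le : D ≤ 7 * κ * T := by nlinarith [hweighted_nonneg sᶜ]
    have hsq : lW * T ^ 2 ≤ 7 * κ * G * T := by
      calc lW * T ^ 2 ≤ lW * (G * ∑ j, u j ^ 2) :=
            mul_le_mul_of_nonneg_left (sq_sum_mul_abs_le s L u) hlW.le
        _ ≤ G * (7 * κ * T) := by
            nlinarith [mul_le_mul_of_nonneg_left (hquad.trans hD_le) hG0]
        _ = 7 * κ * G * T := by ring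
    rcases hT0.eq_or_lt with hT | hT
    · rw [← hT, mul_zero]; positivity
    · nlinarith
  rw [le_div_iff₀ (mul_pos hLmin hlW)]
  nlinarith

lemma sum_abs_sub_le_of_csdeObjective_le [DecidableEq ι] {S : ι → ℝ} {ψ : Matrix ι ι ℝ}
    (hψ : ψ.IsSymm) {lW : ℝ} (hlW : 0 < lW) (hgram : ∀ u : ι → ℝ, lW * ∑ j, u j ^ 2 ≤ u ⬝ᵥ ψ *ᵥ u)
    {L : ι → ℝ} {Lmin κ c B : ℝ} (hLmin : 0 < Lmin) (hL : ∀ j, Lmin ≤ L j) (hκ : 0 < κ)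
    (hc : 0 ≤ c) (hcB : ∀ j, c * B ≤ κ * L j) {bh bs : ι → ℝ} (hbsB : ∀ j, |bs j| ≤ B)
    (hS : ∀ j, |S j - (ψ *ᵥ bs) j| ≤ κ * L j / 2)
    (hle : csdeObjective S ψ (fun j => κ * L j + c * B) c bh
      ≤ csdeObjective S ψ (fun j => κ * L j + c * B) c bs) :
    ∑ j, |bh j - bs j|
      ≤ 56 * κ * (∑ j ∈ univ.filter fun j => bs j ≠ 0, L j ^ 2) / (Lmin * lW) :=
  sum_abs_le_of_cone hlW (hgram (bh - bs)) hLmin hL hκ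
    (quadForm_add_sum_le_of_csdeObjective_le hψ hc hcB hbsB hS hle)

end CSDEObjective

section Gram

variable {ι α : Type*} [MeasurableSpace α]

noncomputable def gramL2 (ν : Measure α) (h : ι → α → ℝ) : Matrix ι ι ℝ :=
  Matrix.of fun i j => ∫ y, h i y * h j y ∂ν

lemma gramL2_isSymm (ν : Measure α) (h : ι → α → ℝ) : (gramL2 ν h).IsSymm :=
  Matrix.IsSymm.ext fun i j => by simp only [gramL2, of_apply, mul_comm]

variable [Fintype ι] {ν : Measure α} {h : ι → α → ℝ}

lemma integral_sum_mul_eq_gramL2_mulVec (hh : ∀ j, MemLp (h j) 2 ν) (β : ι → ℝ) (j : ι) :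
    ∫ y, (∑ k, β k * h k y) * h j y ∂ν = (gramL2 ν h *ᵥ β) j := by
  have hpt : (fun y => (∑ k, β k * h k y) * h j y) = fun y => ∑ k, β k * (h j y * h k y) := by
    funext y
    rw [sum_mul]
    exact sum_congr rfl fun k _ => by ring
  have hint : ∀ k, Integrable (fun y => β k * (h j y * h k y)) ν := fun k =>
    ((hh j).integrable_mul (hh k)).const_mul _
  rw [hpt, integral_finsetSum _ fun k _ => hint k]
  simp only [integral_const_mul, mulVec, dotProduct, gramL2, of_apply]
  exact sum_congr rfl fun k _ => mul_comm _ _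

lemma integral_sq_sum_eq_dotProduct_gramL2_mulVec (hh : ∀ j, MemLp (h j) 2 ν) (β : ι → ℝ) :
    ∫ y, (∑ j, β j * h j y) ^ 2 ∂ν = β ⬝ᵥ gramL2 ν h *ᵥ β := by
  have hsum : MemLp (fun y => ∑ k, β k * h k y) 2 ν :=
    memLp_finsetSum _ fun k _ => (hh k).const_mul (β k)
  have hpt : (fun y => (∑ j, β j * h j y) ^ 2)
      = fun y => ∑ j, β j * ((∑ k, β k * h k y) * h j y) := by
    funext y
    rw [sq, mul_sum]
    exact sum_congr rfl fun j _ => by ring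
  have hint : ∀ j, Integrable (fun y => β j * ((∑ k, β k * h k y) * h j y)) ν := fun j =>
    (hsum.integrable_mul (hh j)).const_mul _
  rw [hpt, integral_finsetSum _ fun j _ => hint j]
  simp only [integral_const_mul, integral_sum_mul_eq_gramL2_mulVec hh, dotProduct]

lemma csdeObjective_empiricalMean_gramL2 (hh : ∀ j, MemLp (h j) 2 ν) {n : ℕ} (x : Fin n → α)
    (ω : ι → ℝ) (c : ℝ) (β : ι → ℝ) :
    csdeObjective (fun j => (∑ i, h j (x i)) / n) (gramL2 ν h) ω c β
      = -(2 / (n : ℝ)) * (∑ i, ∑ j, β j * h j (x i)) + (∫ y, (∑ j, β j * h j y) ^ 2 ∂ν)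
        + 2 * (∑ j, ω j * |β j|) + c * (∑ j, β j ^ 2) := by
  have hlin : -2 * (β ⬝ᵥ fun j => (∑ i, h j (x i)) / n)
      = -(2 / (n : ℝ)) * (∑ i, ∑ j, β j * h j (x i)) := by
    rw [sum_comm]
    simp only [dotProduct, mul_sum, sum_div]
    exact sum_congr rfl fun j _ => sum_congr rfl fun i _ => by ring
  rw [csdeObjective, hlin, integral_sq_sum_eq_dotProduct_gramL2_mulVec hh]

end Gram

lemma integral_comp_eq_integral_mul_of_map_eq_withDensity {Ω α : Type*} [MeasurableSpace Ω]
    [MeasurableSpace α] {μ : Measure Ω} {ν : Measure α} {X : Ω → α} (hX : AEMeasurable X μ)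
    {f : α → ℝ} (hf : AEMeasurable f ν) (hf0 : ∀ y, 0 ≤ f y)
    (hmap : μ.map X = ν.withDensity fun y => ENNReal.ofReal (f y))
    {g : α → ℝ} (hg : AEStronglyMeasurable g ν) :
    ∫ ω, g (X ω) ∂μ = ∫ y, f y * g y ∂ν := by
  have hac : μ.map X ≪ ν := hmap ▸ withDensity_absolutelyContinuous _ _
  rw [← integral_map hX (hg.mono_ac hac), hmap, integral_withDensity_eq_integral_toReal_smul₀
    (f := fun y => ENNReal.ofReal (f y)) (ENNReal.measurable_ofReal.comp_aemeasurable hf)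
    (ae_of_all _ fun _ => ENNReal.ofReal_lt_top)]
  simp only [ENNReal.toReal_ofReal (hf0 _), smul_eq_mul]

section Concentration

variable {Ω : Type*} [MeasurableSpace Ω] {μ : Measure Ω} [IsProbabilityMeasure μ]

lemma measure_le_abs_sum_sub_integral_le {ι : Type*} [Fintype ι] {Y : ι → Ω → ℝ}
    (hind : iIndepFun Y μ) (hY : ∀ i, AEMeasurable (Y i) μ) {a b : ℝ}
    (hab : ∀ i, ∀ᵐ ω ∂μ, Y i ω ∈ Set.Icc a b) {ε : ℝ} (hε : 0 ≤ ε) :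
    μ {ω | ε ≤ |∑ i, (Y i ω - μ[Y i])|}
      ≤ ENNReal.ofReal (2 * Real.exp (-2 * ε ^ 2 / (Fintype.card ι * (b - a) ^ 2))) := by
  have hindZ : iIndepFun (fun i => (fun x : ℝ => x - μ[Y i]) ∘ Y i) μ :=
    hind.comp _ fun i => measurable_id.sub_const _
  have hsum := HasSubgaussianMGF.sum_of_iIndepFun hindZ (s := univ)
    fun i _ => hasSubgaussianMGF_of_mem_Icc (hY i) (hab i)
  have hrate : -ε ^ 2 / (2 * ((∑ _i : ι, (‖b - a‖₊ / 2) ^ 2 : NNReal) : ℝ))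
      = -2 * ε ^ 2 / (Fintype.card ι * (b - a) ^ 2) := by
    push_cast
    rw [sum_const, card_univ, nsmul_eq_mul, Real.norm_eq_abs, div_pow, sq_abs,
      show (2 : ℝ) * (Fintype.card ι * ((b - a) ^ 2 / 2 ^ 2)) = Fintype.card ι * (b - a) ^ 2 / 2
        by ring, div_div_eq_mul_div]
    ring
  have hupper := hsum.measure_ge_le hε
  have hlower := hsum.neg.measure_ge_le hε
  rw [hrate] at hupper hlower
  calc μ {ω | ε ≤ |∑ i, (Y i ω - μ[Y i])|}
      ≤ μ ({ω | ε ≤ ∑ i, (Y i ω - μ[Y i])} ∪ {ω | ε ≤ -∑ i, (Y i ω - μ[Y i])}) :=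
        measure_mono fun _ hω => le_abs.1 (Set.mem_ofPred.1 hω)
    _ ≤ μ {ω | ε ≤ ∑ i, (Y i ω - μ[Y i])} + μ {ω | ε ≤ -∑ i, (Y i ω - μ[Y i])} :=
        measure_union_le _ _
    _ ≤ _ := by
        rw [← ofReal_measureReal, ← ofReal_measureReal, ← ENNReal.ofReal_add measureReal_nonneg
          measureReal_nonneg, two_mul]
        exact ENNReal.ofReal_le_ofReal (add_le_add hupper hlower)

lemma measure_lt_abs_sum_div_sub_le {n : ℕ} (hn : 0 < n) {Y : Fin n → Ω → ℝ}
    (hind : iIndepFun Y μ) (hY : ∀ i, AEMeasurable (Y i) μ) {a b : ℝ}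
    (hab : ∀ i, ∀ᵐ ω ∂μ, Y i ω ∈ Set.Icc a b) {m : ℝ} (hm : ∀ i, μ[Y i] = m) {t : ℝ}
    (ht : 0 ≤ t) :
    μ {ω | t < |(∑ i, Y i ω) / n - m|}
      ≤ ENNReal.ofReal (2 * Real.exp (-2 * n * t ^ 2 / (b - a) ^ 2)) := by
  have hn' : (0 : ℝ) < n := Nat.cast_pos.2 hn
  have hsub : {ω | t < |(∑ i, Y i ω) / n - m|}
      ⊆ {ω | n * t ≤ |∑ i, (Y i ω - μ[Y i])|} := fun ω hω => by
    have hsum : ∑ i, (Y i ω - μ[Y i]) = n * ((∑ i, Y i ω) / n - m) := by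
      simp only [hm, sum_sub_distrib, sum_const, card_univ, Fintype.card_fin, nsmul_eq_mul]
      field_simp
    rw [Set.mem_ofPred, hsum, abs_mul, Nat.abs_cast]
    exact mul_le_mul_of_nonneg_left (Set.mem_ofPred.1 hω).le hn'.le
  have hrate : -2 * (n * t) ^ 2 / (Fintype.card (Fin n) * (b - a) ^ 2)
      = -2 * n * t ^ 2 / (b - a) ^ 2 := by
    rw [Fintype.card_fin, show -2 * (n * t) ^ 2 = n * (-2 * n * t ^ 2) by ring,
      mul_div_mul_left _ _ hn'.ne']
  calc μ {ω | t < |(∑ i, Y i ω) / n - m|} ≤ _ := measure_mono hsub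
    _ ≤ _ := measure_le_abs_sum_sub_integral_le hind hY hab (by positivity)
    _ = _ := by rw [hrate]

lemma measure_lt_abs_empiricalMean_sub_le {α ι : Type*} [MeasurableSpace α] [Fintype ι]
    {ν : Measure α} {n : ℕ} (hn : 0 < n) {X : Fin n → Ω → α} (hXm : ∀ i, Measurable (X i))
    (hindep : iIndepFun X μ) {h : ι → α → ℝ} (hL2 : ∀ j, MemLp (h j) 2 ν) {L : ι → ℝ}
    (hbd : ∀ j y, 0 ≤ h j y ∧ h j y ≤ L j) {β : ι → ℝ} (hβ : ∀ j, 0 ≤ β j)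
    (hXdens : ∀ i, μ.map (X i) = ν.withDensity fun y => ENNReal.ofReal (∑ j, β j * h j y))
    (j : ι) {t : ℝ} (ht : 0 ≤ t) :
    μ {ω | t < |(∑ i, h j (X i ω)) / n - (gramL2 ν h *ᵥ β) j|}
      ≤ ENNReal.ofReal (2 * Real.exp (-2 * n * t ^ 2 / L j ^ 2)) := by
  have hmeas : ∀ i, AEMeasurable (h j) (μ.map (X i)) := fun i =>
    (hL2 j).aestronglyMeasurable.aemeasurable.mono_ac
      (hXdens i ▸ withDensity_absolutelyContinuous _ _)
  have hdens : AEMeasurable (fun y => ∑ k, β k * h k y) ν :=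
    Finset.aemeasurable_fun_sum _ fun k _ => (hL2 k).aestronglyMeasurable.aemeasurable.const_mul _
  have hmean : ∀ i, μ[h j ∘ X i] = (gramL2 ν h *ᵥ β) j := fun i => by
    rw [Function.comp_def, integral_comp_eq_integral_mul_of_map_eq_withDensity
      (hXm i).aemeasurable hdens (fun y => sum_nonneg fun k _ => mul_nonneg (hβ k) (hbd k y).1)
      (hXdens i) (hL2 j).aestronglyMeasurable, integral_sum_mul_eq_gramL2_mulVec hL2]
  simpa only [sub_zero, Function.comp_apply] using measure_lt_abs_sum_div_sub_le hn
    (hindep.comp₀ _ (fun i => (hXm i).aemeasurable) hmeas)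
    (fun i => (hmeas i).comp_aemeasurable (hXm i).aemeasurable)
    (fun i => ae_of_all _ fun ω => hbd j (X i ω)) hmean ht

lemma ofReal_one_sub_sum_le_measure_forall {ι : Type*} [Fintype ι] {P : ι → Ω → Prop}
    {p : ι → ℝ} (hp : ∀ j, 0 ≤ p j) (hfail : ∀ j, μ {ω | ¬ P j ω} ≤ ENNReal.ofReal (p j)) :
    ENNReal.ofReal (1 - ∑ j, p j) ≤ μ {ω | ∀ j, P j ω} := by
  have hcompl : μ {ω | ∀ j, P j ω}ᶜ ≤ ENNReal.ofReal (∑ j, p j) := by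
    rw [ENNReal.ofReal_sum_of_nonneg fun j _ => hp j]
    calc μ {ω | ∀ j, P j ω}ᶜ = μ (⋃ j, {ω | ¬ P j ω}) := by
          congr 1; ext ω; simp
      _ ≤ ∑ j, μ {ω | ¬ P j ω} := measure_iUnion_fintype_le μ _
      _ ≤ _ := sum_le_sum fun j _ => hfail j
  have hunion : 1 ≤ μ {ω | ∀ j, P j ω} + μ {ω | ∀ j, P j ω}ᶜ := by
    rw [← measure_univ (μ := μ), ← Set.union_compl_self {ω | ∀ j, P j ω}]
    exact measure_union_le _ _
  rw [ENNReal.ofReal_sub _ (sum_nonneg fun j _ => hp j), ENNReal.ofReal_one]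
  exact tsub_le_iff_right.2 (hunion.trans (add_le_add_right hcompl _))

end Concentration

theorem csde_l1_error_le_of_gramL2 {Ω α ι : Type*} [MeasurableSpace Ω] [MeasurableSpace α]
    [Fintype ι] [DecidableEq ι] {μ : Measure Ω} [IsProbabilityMeasure μ] {ν : Measure α} {n : ℕ}
    (hn : 0 < n) {X : Fin n → Ω → α} (hXm : ∀ i, Measurable (X i)) (hindep : iIndepFun X μ)
    {h : ι → α → ℝ} (hL2 : ∀ j, MemLp (h j) 2 ν) {L : ι → ℝ}
    (hbd : ∀ j y, 0 ≤ h j y ∧ h j y ≤ L j) {bs : ι → ℝ} (hbs0 : ∀ j, 0 ≤ bs j)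
    (hXdens : ∀ i, μ.map (X i) = ν.withDensity fun y => ENNReal.ofReal (∑ j, bs j * h j y))
    {lW : ℝ} (hlW : 0 < lW) (hgram : ∀ u : ι → ℝ, lW * ∑ j, u j ^ 2 ≤ u ⬝ᵥ gramL2 ν h *ᵥ u)
    {Lmin κ c B : ℝ} (hLmin : 0 < Lmin) (hL : ∀ j, Lmin ≤ L j) (hκ : 0 < κ) (hc : 0 ≤ c)
    (hcB : ∀ j, c * B ≤ κ * L j) (hbsB : ∀ j, |bs j| ≤ B) {bhat : Ω → ι → ℝ}
    (hmin : ∀ ω, csdeObjective (fun j => (∑ i, h j (X i ω)) / n) (gramL2 ν h)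
        (fun j => κ * L j + c * B) c (bhat ω)
      ≤ csdeObjective (fun j => (∑ i, h j (X i ω)) / n) (gramL2 ν h)
        (fun j => κ * L j + c * B) c bs) :
    ENNReal.ofReal (1 - ∑ j, 2 * Real.exp (-2 * n * (κ * L j / 2) ^ 2 / L j ^ 2))
      ≤ μ {ω | ∑ j, |bhat ω j - bs j|
          ≤ 56 * κ * (∑ j ∈ univ.filter fun j => bs j ≠ 0, L j ^ 2) / (Lmin * lW)} := by
  have ht : ∀ j, 0 ≤ κ * L j / 2 := fun j => by
    have := hLmin.le.trans (hL j)
    positivity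
  calc _ ≤ μ {ω | ∀ j, |(∑ i, h j (X i ω)) / n - (gramL2 ν h *ᵥ bs) j| ≤ κ * L j / 2} :=
        ofReal_one_sub_sum_le_measure_forall (fun j => by positivity) fun j => by
          simpa only [not_le] using
            measure_lt_abs_empiricalMean_sub_le hn hXm hindep hL2 hbd hbs0 hXdens j (ht j)
    _ ≤ _ := measure_mono fun ω hω => sum_abs_sub_le_of_csdeObjective_le (gramL2_isSymm ν h)
        hlW hgram hLmin hL hκ hc hcB hbsB hω (hmin ω)

lemma two_mul_exp_hoeffding_rate_le {n : ℕ} (hn : 0 < n) {x v L : ℝ} (hx : 1 ≤ x)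
    (hv : v = Real.sqrt (Real.log x / n)) (hL : L ≠ 0) :
    2 * Real.exp (-2 * n * (2 * Real.sqrt 2 * v * L / 2) ^ 2 / L ^ 2) ≤ 2 / x := by
  have hn' : (n : ℝ) ≠ 0 := Nat.cast_ne_zero.2 hn.ne'
  have hnv : n * v ^ 2 = Real.log x := by
    rw [hv, Real.sq_sqrt (div_nonneg (Real.log_nonneg hx) (Nat.cast_nonneg n)),
      mul_div_cancel₀ _ hn']
  have hrate : -2 * n * (2 * Real.sqrt 2 * v * L / 2) ^ 2 / L ^ 2 = -(4 * Real.log x) := by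
    rw [div_pow, mul_pow, mul_pow, mul_pow, Real.sq_sqrt zero_le_two, ← hnv]
    field_simp
    ring
  calc 2 * Real.exp (-2 * n * (2 * Real.sqrt 2 * v * L / 2) ^ 2 / L ^ 2)
      ≤ 2 * Real.exp (-Real.log x) := by
        rw [hrate]
        gcongr 2 * Real.exp ?_
        linarith [Real.log_nonneg hx]
    _ = 2 / x := by rw [Real.exp_neg, Real.exp_log (by linarith), div_eq_mul_inv]

lemma one_lt_two_mul_sq_div {W : ℕ} (hW : 0 < W) {δ : ℝ} (hδ0 : 0 < δ) (hδ1 : δ < 1) :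
    1 < 2 * (W : ℝ) ^ 2 / δ := by
  have : (1 : ℝ) ≤ W := Nat.one_le_cast.2 hW
  rw [one_lt_div hδ0]
  nlinarith

lemma sum_two_mul_exp_hoeffding_rate_le {n W : ℕ} (hn : 0 < n) (hW : 0 < W) {δ v : ℝ}
    (hδ0 : 0 < δ) (hδ1 : δ < 1) (hv : v = Real.sqrt (Real.log (2 * W ^ 2 / δ) / n))
    {L : Fin W → ℝ} (hL : ∀ j, L j ≠ 0) :
    ∑ j, 2 * Real.exp (-2 * n * (2 * Real.sqrt 2 * v * L j / 2) ^ 2 / L j ^ 2) ≤ δ / W := by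
  calc _ ≤ ∑ _j : Fin W, 2 / (2 * (W : ℝ) ^ 2 / δ) := sum_le_sum fun j _ =>
        two_mul_exp_hoeffding_rate_le hn (one_lt_two_mul_sq_div hW hδ0 hδ1).le hv (hL j)
    _ = δ / W := by
        rw [sum_const, card_univ, Fintype.card_fin, nsmul_eq_mul]
        field_simp

theorem csde_l1_error_eigenvalue_general {d W n : ℕ} (hn : 0 < n) (hW : 0 < W)
    {Ω : Type*} [MeasurableSpace Ω] (μ : Measure Ω) [IsProbabilityMeasure μ]
    (X : Fin n → Ω → (Fin d → ℝ)) (hXm : ∀ i, Measurable (X i))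
    (hindep : iIndepFun X μ)
    (h : Fin W → (Fin d → ℝ) → ℝ)
    (hL2 : ∀ j, MemLp (h j) 2 (volume : Measure (Fin d → ℝ)))
    (L : Fin W → ℝ)
    (hbd : ∀ j y, 0 ≤ h j y ∧ h j y ≤ L j)
    (Lmin : ℝ) (hLminpos : 0 < Lmin)
    (hLmin : Lmin = Finset.univ.inf' ⟨⟨0, hW⟩, Finset.mem_univ _⟩ L)
    -- the true mixture coefficients and the common density h_{β*} of the Xᵢ
    (bs : Fin W → ℝ) (hbs0 : ∀ j, 0 ≤ bs j)
    (B : ℝ) (hbsne : ∃ j, bs j ≠ 0) (hbsB : ∀ j, |bs j| ≤ B)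
    (hXdens : ∀ i, μ.map (X i) = (volume : Measure (Fin d → ℝ)).withDensity
      (fun y => ENNReal.ofReal (∑ j, bs j * h j y)))
    -- the Gram matrix is positive definite with least eigenvalue ≥ λW > 0
    (lW : ℝ) (hlW : 0 < lW)
    (hgram : ∀ u : Fin W → ℝ,
      lW * (∑ j, (u j) ^ 2) ≤ ∑ i, ∑ j, u i * (∫ y, h i y * h j y) * u j)
    (δ : ℝ) (hδ0 : 0 < δ) (hδ1 : δ < 1)
    (v : ℝ) (hv : v = Real.sqrt (Real.log (2 * W ^ 2 / δ) / n))
    (omt : Fin W → ℝ) (homt : ∀ j, omt j = 2 * Real.sqrt 2 * L j * v)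
    (c : ℝ) (hc : c = (Finset.univ.inf' ⟨⟨0, hW⟩, Finset.mem_univ _⟩ omt) / B)
    (ωw : Fin W → ℝ) (hωw : ∀ j, ωw j = omt j + c * B)
    (F : Ω → (Fin W → ℝ) → ℝ)
    (hF : ∀ ω (β : Fin W → ℝ), F ω β =
        -(2 / (n : ℝ)) * (∑ i, ∑ j, β j * h j (X i ω))
        + (∫ y, (∑ j, β j * h j y) ^ 2)
        + 2 * (∑ j, ωw j * |β j|) + c * (∑ j, (β j) ^ 2))
    (bhat : Ω → Fin W → ℝ)
    (hmin : ∀ ω (β : Fin W → ℝ), F ω (bhat ω) ≤ F ω β)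
    (Gs : ℝ) (hGs : Gs = ∑ j ∈ Finset.filter (fun j => bs j ≠ 0) Finset.univ, (L j) ^ 2) :
    ENNReal.ofReal (1 - δ / W) ≤
      μ {ω | (∑ j, |bhat ω j - bs j|) ≤ 288 * Real.sqrt 2 * v * Gs / (Lmin * lW)} := by
  have hB : 0 < B := by
    obtain ⟨j, hj⟩ := hbsne
    exact (abs_pos.2 hj).trans_le (hbsB j)
  have hLmin_le : ∀ j, Lmin ≤ L j := fun j => hLmin ▸ inf'_le L (mem_univ j)
  have hL : ∀ j, 0 < L j := fun j => hLminpos.trans_le (hLmin_le j)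
  have hv0 : 0 < v := hv ▸ Real.sqrt_pos.2
    (div_pos (Real.log_pos (one_lt_two_mul_sq_div hW hδ0 hδ1)) (Nat.cast_pos.2 hn))
  have homt' : ∀ j, omt j = 2 * Real.sqrt 2 * v * L j := fun j => by rw [homt]; ring
  have hcB : ∀ j, c * B ≤ 2 * Real.sqrt 2 * v * L j := fun j => by
    rw [hc, div_mul_cancel₀ _ hB.ne', ← homt']
    exact inf'_le omt (mem_univ j)
  have hc0 : 0 ≤ c := hc ▸ div_nonneg (le_inf' _ _ fun j _ => by
    rw [homt']; have := hL j; positivity) hB.le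
  have hgram' : ∀ u, lW * ∑ j, u j ^ 2 ≤ u ⬝ᵥ gramL2 volume h *ᵥ u := fun u => by
    rw [← Matrix.toBilin'_apply', Matrix.toBilin'_apply]
    exact hgram u
  have hobj : ∀ ω β, F ω β = csdeObjective (fun j => (∑ i, h j (X i ω)) / n) (gramL2 volume h)
      (fun j => 2 * Real.sqrt 2 * v * L j + c * B) c β := fun ω β => by
    rw [csdeObjective_empiricalMean_gramL2 hL2, hF]
    simp only [hωw, homt']
  have hfail := sum_two_mul_exp_hoeffding_rate_le hn hW hδ0 hδ1 hv fun j => (hL j).ne'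
  have hconst : 56 * (2 * Real.sqrt 2 * v) * (∑ j ∈ univ.filter fun j => bs j ≠ 0, L j ^ 2)
      / (Lmin * lW) ≤ 288 * Real.sqrt 2 * v * Gs / (Lmin * lW) := by
    have hGs0 : 0 ≤ Real.sqrt 2 * v * Gs := by rw [hGs]; positivity
    rw [← hGs]
    exact div_le_div_of_nonneg_right (by nlinarith) (by positivity)
  calc ENNReal.ofReal (1 - δ / W) ≤ _ := ENNReal.ofReal_le_ofReal (by linarith)
    _ ≤ _ := csde_l1_error_le_of_gramL2 hn hXm hindep hL2 hbd hbs0 hXdens hlW hgram' hLminpos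
        hLmin_le (by positivity) hc0 hcB hbsB fun ω => by simpa only [hobj] using hmin ω bs
    _ ≤ _ := measure_mono fun _ hω => le_trans hω hconst

/-- Corollary 2: ℓ₁-estimation error bound for the CSDE under the
minimal eigenvalue assumption, with probability at least 1 − δ/W. -/
theorem csde_l1_error_eigenvalue {d W n : ℕ} (hn : 0 < n) (hW : 0 < W)
    {Ω : Type*} [MeasurableSpace Ω] (μ : Measure Ω) [IsProbabilityMeasure μ]
    (X : Fin n → Ω → (Fin d → ℝ)) (hXm : ∀ i, Measurable (X i))
    (hindep : iIndepFun X μ)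
    (hid : ∀ i j, IdentDistrib (X i) (X j) μ μ)
    (h : Fin W → (Fin d → ℝ) → ℝ)
    (hL2 : ∀ j, MemLp (h j) 2 (volume : Measure (Fin d → ℝ)))
    (L : Fin W → ℝ)
    (hbd : ∀ j y, 0 ≤ h j y ∧ h j y ≤ L j)
    (hdens1 : ∀ j, (∫ y, h j y) = 1)
    (hnorm1 : ∀ j, (∫ y, (h j y) ^ 2) = 1)
    (Lmin : ℝ) (hLminpos : 0 < Lmin)
    (hLmin : Lmin = Finset.univ.inf' ⟨⟨0, hW⟩, Finset.mem_univ _⟩ L)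
    -- the true mixture coefficients and the common density h_{β*} of the Xᵢ
    (bs : Fin W → ℝ) (hbs0 : ∀ j, 0 ≤ bs j) (hbs1 : (∑ j, bs j) = 1)
    (B : ℝ) (hbsne : ∃ j, bs j ≠ 0) (hbsB : ∀ j, |bs j| ≤ B)
    (hXdens : ∀ i, μ.map (X i) = (volume : Measure (Fin d → ℝ)).withDensity
      (fun y => ENNReal.ofReal (∑ j, bs j * h j y)))
    -- the Gram matrix is positive definite with least eigenvalue ≥ λW > 0
    (lW : ℝ) (hlW : 0 < lW)
    (hgram : ∀ u : Fin W → ℝ,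
      lW * (∑ j, (u j) ^ 2) ≤ ∑ i, ∑ j, u i * (∫ y, h i y * h j y) * u j)
    (δ : ℝ) (hδ0 : 0 < δ) (hδ1 : δ < 1)
    (v : ℝ) (hv : v = Real.sqrt (Real.log (2 * W ^ 2 / δ) / n))
    (omt : Fin W → ℝ) (homt : ∀ j, omt j = 2 * Real.sqrt 2 * L j * v)
    (c : ℝ) (hc : c = (Finset.univ.inf' ⟨⟨0, hW⟩, Finset.mem_univ _⟩ omt) / B)
    (ωw : Fin W → ℝ) (hωw : ∀ j, ωw j = omt j + c * B)
    (F : Ω → (Fin W → ℝ) → ℝ)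
    (hF : ∀ ω (β : Fin W → ℝ), F ω β =
        -(2 / (n : ℝ)) * (∑ i, ∑ j, β j * h j (X i ω))
        + (∫ y, (∑ j, β j * h j y) ^ 2)
        + 2 * (∑ j, ωw j * |β j|) + c * (∑ j, (β j) ^ 2))
    (bhat : Ω → Fin W → ℝ) (hbhatm : Measurable bhat)
    (hmin : ∀ ω (β : Fin W → ℝ), F ω (bhat ω) ≤ F ω β)
    (Gs : ℝ) (hGs : Gs = ∑ j ∈ Finset.filter (fun j => bs j ≠ 0) Finset.univ, (L j) ^ 2) :
    ENNReal.ofReal (1 - δ / W) ≤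
      μ {ω | (∑ j, |bhat ω j - bs j|) ≤ 288 * Real.sqrt 2 * v * Gs / (Lmin * lW)} :=
  csde_l1_error_eigenvalue_general hn hW μ X hXm hindep h hL2 L hbd Lmin hLminpos hLmin bs hbs0 B
    hbsne hbsB hXdens lW hlW hgram δ hδ0 hδ1 v hv omt homt c hc ωw hωw F hF bhat hmin Gs hGs
end
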